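/- arXiv:math/0012089 — 3 statements merged into one kernel-verified Lean document; each statement's English description precedes it below -/
import Mathlib

section
/- Let K be a finite simple graph, w a vertex of K, and let K' be obtained from K by adding a new vertex v which is not adjacent to w but is adjacent to every neighbor of w in K (and possibly to other vertices of K). Then f(K') = f(K), where f(G) = Σ_C (-1)^{|C|} over independent subsets C. -/
open Finset
open scoped Classical

/-- `fOn G s` is `Σ (-1)^{|C|}` over all independent subsets `C ⊆ s` of the graph `G`. -/
noncomputable def fOn {V : Type*} (G : SimpleGraph V) (s : Finset V) : ℤ :=
  ∑ C ∈ s.powerset.filter (fun C => ∀ u ∈ C, ∀ v ∈ C, ¬ G.Adj u v), (-1 : ℤ) ^ C.card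

/-- `fGraph G = Σ (-1)^{|C|}` over all independent vertex subsets `C` of `G`. -/
noncomputable def fGraph {V : Type*} [Fintype V] (G : SimpleGraph V) : ℤ :=
  fOn G Finset.univ

/-- Auxiliary: the signed sum over independent sets containing `none` vanishes, by the
involution toggling `some w`. -/
lemma aux_zero {V : Type*} (K : SimpleGraph V) (K' : SimpleGraph (Option V)) (w : V)
    (hind : ∀ a b : V, K'.Adj (some a) (some b) ↔ K.Adj a b)
    (hvw : ¬ K'.Adj none (some w))
    (hnbr : ∀ u : V, K.Adj w u → K'.Adj none (some u))
    (s : Finset (Finset (Option V)))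
    (hs : ∀ C, C ∈ s ↔ (none ∈ C ∧ ∀ u ∈ C, ∀ v ∈ C, ¬ K'.Adj u v)) :
    ∑ C ∈ s, (-1 : ℤ) ^ C.card = 0 := by
  classical
  refine Finset.sum_involution
    (fun C _ => if some w ∈ C then C.erase (some w) else insert (some w) C)
    (fun C hC => ?_) (fun C hC _ => ?_) (fun C hC => ?_) (fun C hC => ?_)
  · by_cases hw : some w ∈ C
    · simp only [hw, if_true, Finset.card_erase_of_mem hw]
      have hpos : 0 < C.card := Finset.card_pos.2 ⟨_, hw⟩
      rw [← Nat.succ_pred_eq_of_pos hpos, Nat.succ_sub_one, pow_succ]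
      ring
    · simp only [hw, if_false, Finset.card_insert_of_notMem hw, pow_succ]
      ring
  · by_cases hw : some w ∈ C
    · simp only [hw, if_true]
      intro h
      exact (h ▸ Finset.notMem_erase (some w) C) hw
    · simp only [hw, if_false]
      intro h
      exact hw (h ▸ Finset.mem_insert_self (some w) C)
  · obtain ⟨hCn, hCind⟩ := (hs C).1 hC
    have key : ∀ u ∈ C, ¬ K'.Adj (some w) u := by
      intro u hu hadj
      match u with
      | none => exact hvw hadj.symm
      | some a =>
        exact hCind none hCn (some a) hu (hnbr a ((hind w a).1 hadj))
    by_cases hw : some w ∈ C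
    · simp only [hw, if_true]
      refine (hs _).2 ⟨Finset.mem_erase.2 ⟨by simp, hCn⟩, ?_⟩
      intro u hu v hv
      exact hCind u (Finset.mem_of_mem_erase hu) v (Finset.mem_of_mem_erase hv)
    · simp only [hw, if_false]
      refine (hs _).2 ⟨Finset.mem_insert_of_mem hCn, ?_⟩
      intro u hu v hv
      rcases Finset.mem_insert.1 hu with rfl | hu
      · rcases Finset.mem_insert.1 hv with rfl | hv
        · exact fun h => K'.irrefl h
        · exact key v hv
      · rcases Finset.mem_insert.1 hv with rfl | hv
        · exact fun h => key u hu h.symm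
        · exact hCind u hu v hv
  · by_cases hw : some w ∈ C
    · simp only [hw, if_true, Finset.notMem_erase, if_false]
      exact Finset.insert_erase hw
    · simp only [hw, if_false, Finset.mem_insert_self, if_true]
      exact Finset.erase_insert hw

/-- Auxiliary: independent sets of `K'` avoiding `none` biject with independent sets of `K`. -/
lemma aux_bij {V : Type*} (K : SimpleGraph V) (K' : SimpleGraph (Option V)) (w : V)
    (hind : ∀ a b : V, K'.Adj (some a) (some b) ↔ K.Adj a b)
    (s : Finset (Finset (Option V))) (t : Finset (Finset V))
    (hs : ∀ C, C ∈ s ↔ (none ∉ C ∧ ∀ u ∈ C, ∀ v ∈ C, ¬ K'.Adj u v))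
    (ht : ∀ C, C ∈ t ↔ ∀ u ∈ C, ∀ v ∈ C, ¬ K.Adj u v) :
    ∑ C ∈ s, (-1 : ℤ) ^ C.card = ∑ C ∈ t, (-1 : ℤ) ^ C.card := by
  classical
  refine Finset.sum_nbij' (i := fun C => C.image (fun o => o.getD w))
    (j := fun C => C.image some) ?_ ?_ ?_ ?_ ?_
  · intro C hC
    obtain ⟨hCn, hCind⟩ := (hs C).1 hC
    refine (ht _).2 ?_
    intro a ha b hb hab
    simp only [Finset.mem_image] at ha hb
    obtain ⟨oa, hoa, rfl⟩ := ha
    obtain ⟨ob, hob, rfl⟩ := hb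
    match oa, ob with
    | none, _ => exact hCn hoa
    | _, none => exact hCn hob
    | some a, some b =>
      exact hCind _ hoa _ hob ((hind a b).2 hab)
  · intro C hC
    have hCind := (ht C).1 hC
    refine (hs _).2 ⟨by simp, ?_⟩
    intro u hu v hv
    simp only [Finset.mem_image] at hu hv
    obtain ⟨a, ha, rfl⟩ := hu
    obtain ⟨b, hb, rfl⟩ := hv
    rw [hind]
    exact hCind a ha b hb
  · intro C hC
    obtain ⟨hCn, -⟩ := (hs C).1 hC
    simp only [Finset.image_image]
    have h : Set.EqOn (some ∘ fun o => o.getD w) id (C : Set (Option V)) := by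
      intro o ho
      match o with
      | none => exact absurd (Finset.mem_coe.1 ho) hCn
      | some a => rfl
    rw [Finset.image_congr h, Finset.image_id]
  · intro C hC
    simp only [Finset.image_image]
    have h : Set.EqOn ((fun o => o.getD w) ∘ some) id (C : Set V) := fun a _ => rfl
    rw [Finset.image_congr h, Finset.image_id]
  · intro C hC
    obtain ⟨hCn, -⟩ := (hs C).1 hC
    congr 1
    rw [Finset.card_image_of_injOn]
    intro a ha b hb hab
    match a, b with
    | none, _ => exact absurd ha hCn
    | _, none => exact absurd hb hCn
    | some a, some b => simpa using hab

/-- Duplication: if `K'` is obtained from `K` by adding a new vertex `v` (modelled as `none` in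
`Option V`) which is not adjacent to `w` but is adjacent to every neighbour of `w`
(and possibly to other vertices), then `f(K') = f(K)`. -/
theorem fGraph_duplication {V : Type*} [Fintype V] (K : SimpleGraph V)
    (K' : SimpleGraph (Option V)) (w : V)
    (hind : ∀ a b : V, K'.Adj (some a) (some b) ↔ K.Adj a b)
    (hvw : ¬ K'.Adj none (some w))
    (hnbr : ∀ u : V, K.Adj w u → K'.Adj none (some u)) :
    fGraph K' = fGraph K := by
  classical
  unfold fGraph fOn
  rw [← Finset.sum_filter_add_sum_filter_not _ (fun C => none ∈ C),
    aux_zero K K' w hind hvw hnbr _ (fun C => by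
      simp only [Finset.mem_filter, Finset.mem_powerset]
      exact ⟨fun h => ⟨h.2, h.1.2⟩, fun h => ⟨⟨Finset.subset_univ _, h.2⟩, h.1⟩⟩),
    zero_add]
  refine aux_bij K K' w hind _ _ (fun C => by
      simp only [Finset.mem_filter, Finset.mem_powerset]
      exact ⟨fun h => ⟨h.2, h.1.2⟩, fun h => ⟨⟨Finset.subset_univ _, h.2⟩, h.1⟩⟩)
    (fun C => by
      simp only [Finset.mem_filter, Finset.mem_powerset]
      exact ⟨fun h => h.2, fun h => ⟨Finset.subset_univ _, h⟩⟩)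
end

section
/- Let K be a finite simple graph and v, w two distinct non-adjacent vertices with the same neighborhood (N(v) = N(w), a 'duplicated' pair). Then f(K) = f(K - v), i.e., deleting one of the duplicated vertices does not change f, where f(G) = Σ_C (-1)^{|C|} over independent subsets. -/
open Finset
open scoped Classical

/-- If `v, w` are distinct non-adjacent vertices with the same (open) neighbourhood, then
deleting `v` does not change `f`: `f(K) = f(K - v)`. -/
theorem fGraph_delete_duplicate {V : Type*} [Fintype V] (G : SimpleGraph V)
    (v w : V) (hvw : v ≠ w) (hadj : ¬ G.Adj v w)
    (hnbr : ∀ u : V, G.Adj v u ↔ G.Adj w u) :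
    fGraph G = fOn G (Finset.univ.erase v) := by
  classical
  unfold fGraph fOn
  have split := Finset.sum_filter_add_sum_filter_not
      (Finset.univ.powerset.filter (fun C : Finset V => ∀ u ∈ C, ∀ x ∈ C, ¬ G.Adj u x))
      (fun C => v ∉ C) (fun C => (-1 : ℤ) ^ C.card)
  have h1 : (Finset.univ.powerset.filter (fun C : Finset V => ∀ u ∈ C, ∀ x ∈ C, ¬ G.Adj u x)).filter
      (fun C => v ∉ C)
      = (Finset.univ.erase v).powerset.filter (fun C => ∀ u ∈ C, ∀ x ∈ C, ¬ G.Adj u x) := by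
    ext C
    simp only [Finset.mem_filter, Finset.mem_powerset, Finset.subset_erase]
    tauto
  have h2 : ∑ C ∈ (Finset.univ.powerset.filter
      (fun C : Finset V => ∀ u ∈ C, ∀ x ∈ C, ¬ G.Adj u x)).filter
      (fun C => ¬ v ∉ C), (-1 : ℤ) ^ C.card = 0 := by
    have mem_iff : ∀ C : Finset V, C ∈ (Finset.univ.powerset.filter
        (fun C : Finset V => ∀ u ∈ C, ∀ x ∈ C, ¬ G.Adj u x)).filter (fun C => ¬ v ∉ C) ↔
        (∀ u ∈ C, ∀ x ∈ C, ¬ G.Adj u x) ∧ v ∈ C := by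
      intro C
      simp [Finset.mem_filter]
    have hw_adj : ∀ (C : Finset V), (∀ u ∈ C, ∀ x ∈ C, ¬ G.Adj u x) → v ∈ C →
        ∀ u ∈ C, ¬ G.Adj w u := by
      intro C hind hv u hu hadj'
      exact hind v hv u hu ((hnbr u).mpr hadj')
    apply Finset.sum_involution (fun C _ => if w ∈ C then C.erase w else insert w C)
    case hg₁ =>
      intro C hC
      by_cases hw : w ∈ C
      · simp only [hw, if_true, Finset.card_erase_of_mem hw]
        obtain ⟨m, hm⟩ : ∃ m, C.card = m + 1 :=
          ⟨C.card - 1, by have := Finset.card_pos.2 ⟨w, hw⟩; omega⟩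
        rw [hm]
        simp [pow_succ]
      · simp only [hw, if_false, Finset.card_insert_of_notMem hw, pow_succ]
        ring
    case hg₃ =>
      intro C hC _
      by_cases hw : w ∈ C
      · simp only [hw, if_true]
        intro h
        exact (h ▸ Finset.notMem_erase w C) hw
      · simp only [hw, if_false]
        intro h
        exact hw (h ▸ Finset.mem_insert_self w C)
    case g_mem =>
      intro C hC
      rw [mem_iff] at hC ⊢
      obtain ⟨hind, hv⟩ := hC
      by_cases hw : w ∈ C
      · simp only [hw, if_true]
        refine ⟨fun u hu x hx => hind u (Finset.mem_of_mem_erase hu) x (Finset.mem_of_mem_erase hx),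
          Finset.mem_erase.mpr ⟨hvw, hv⟩⟩
      · simp only [hw, if_false]
        refine ⟨?_, Finset.mem_insert_of_mem hv⟩
        intro u hu x hx
        rcases Finset.mem_insert.mp hu with rfl | hu' <;>
          rcases Finset.mem_insert.mp hx with rfl | hx'
        · simp
        · exact hw_adj C hind hv x hx'
        · intro h; exact hw_adj C hind hv u hu' (G.adj_symm h)
        · exact hind u hu' x hx'
    case hg₄ =>
      intro C hC
      by_cases hw : w ∈ C
      · simp only [hw, if_true]
        rw [if_neg (Finset.notMem_erase w C), Finset.insert_erase hw]
      · simp only [hw, if_false]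
        rw [if_pos (Finset.mem_insert_self w C), Finset.erase_insert hw]
  rw [h1, h2, add_zero] at split
  convert split.symm using 2 <;> (ext C; simp)
end

section
/- Let C be a set of chords on a disjoint union of circles. Suppose (i) each chord has both endpoints on the same circle, and (ii) no two chords on the same circle have endpoints alternating around that circle. Then splitting along all |C| chords transforms the |s| circles into exactly |s| + |C| circles. (Abstract version, by induction: splitting a circle along a chord whose endpoints lie on it yields two circles, and conditions (i),(ii) are preserved by each splitting, so k independent chords increase the circle count by exactly k.) -/
/-- The number of cycles (state circles) of a permutation: the number of orbits of the
relation `SameCycle`.  The cycles of `σ` model a disjoint union of circles, with `σ` sending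
each marked point to the next marked point around its circle. -/
noncomputable def cycleCount {P : Type*} (σ : Equiv.Perm P) : ℕ :=
  Nat.card (Quotient (Setoid.mk σ.SameCycle
    ⟨fun x => Equiv.Perm.SameCycle.refl σ x,
     fun h => h.symm, fun h₁ h₂ => h₁.trans h₂⟩))

/-!
Splitting a cycle of `σ` along a chord `(a, b)` means passing to `σ * swap a b`: the cycle
through `a` and `b` breaks into the arcs `(a, b]` and `(b, a]`, and the other cycles are
untouched, so one cycle is gained. Consequently two points are on one cycle after the split
iff they were before and they agree on whether they lie on the cycle of `b`.

For the induction on the chords, independence must survive a split along a chord `p`. For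
chords `q ≠ r` the transpositions of `p` and `q` commute, so splitting along `p` then `q` is
splitting along `q` then `p`; choosing the endpoint of `p` whose cycle after the first split
avoids `r`, the criterion above shows that the endpoints of `r`, together after the split
along `q`, are not separated by the split along `p`.
-/

namespace Equiv.Perm

variable {P : Type*} {σ : Perm P} {x y : P}

theorem SameCycle.mem_of_mapsTo [Finite P] {S : Set P} (hS : Set.MapsTo σ S S) (hx : x ∈ S)
    (h : σ.SameCycle x y) : y ∈ S := by
  obtain ⟨n, rfl⟩ := h.exists_nat_pow_eq
  rw [coe_pow]
  exact hS.iterate n hx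

variable [DecidableEq P] {a b : P}

theorem SameCycle.swap_apply (hab : σ.SameCycle a b) (z : P) : σ.SameCycle z (swap a b z) := by
  rw [swap_apply_def]
  split_ifs with h₁ h₂
  · exact h₁ ▸ hab
  · exact h₂ ▸ hab.symm
  · exact .rfl

theorem mul_swap_apply_of_not_sameCycle (ha : ¬σ.SameCycle x a) (hb : ¬σ.SameCycle x b)
    (hy : σ.SameCycle x y) : (σ * swap a b) y = σ y := by
  rw [mul_apply, swap_apply_of_ne_of_ne (fun h : y = a => ha (h ▸ hy))
    (fun h : y = b => hb (h ▸ hy))]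

variable [Finite P]

theorem SameCycle.mul_swap_of_not_sameCycle (ha : ¬σ.SameCycle x a) (hb : ¬σ.SameCycle x b)
    (h : σ.SameCycle x y) : (σ * swap a b).SameCycle x y := by
  refine (h.mem_of_mapsTo (S := {z | σ.SameCycle x z ∧ (σ * swap a b).SameCycle x z})
    (fun z hz => ?_) ⟨.rfl, .rfl⟩).2
  have hτz := mul_swap_apply_of_not_sameCycle ha hb hz.1
  exact ⟨hz.1.apply_right, hτz ▸ hz.2.apply_right⟩

theorem SameCycle.of_mul_swap (hab : σ.SameCycle a b) (h : (σ * swap a b).SameCycle x y) :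
    σ.SameCycle x y :=
  h.mem_of_mapsTo (S := {z | σ.SameCycle x z})
    (fun _ hz => (hz.trans (hab.swap_apply _)).apply_right) .rfl

theorem SameCycle.mul_swap_or (h : σ.SameCycle a x) :
    (σ * swap a b).SameCycle a x ∨ (σ * swap a b).SameCycle b x := by
  refine h.mem_of_mapsTo (S := {z | (σ * swap a b).SameCycle a z ∨ (σ * swap a b).SameCycle b z})
    (fun z hz => ?_) (.inl .rfl)
  have hσz : σ z = (σ * swap a b) (swap a b z) := by simp
  simp only [Set.mem_ofPred_eq, hσz]
  rw [swap_apply_def]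
  split_ifs with h₁ h₂
  · exact .inr (SameCycle.rfl.apply_right)
  · exact .inl (SameCycle.rfl.apply_right)
  · exact hz.imp (·.apply_right) (·.apply_right)

theorem not_sameCycle_mul_swap (hne : a ≠ b) (hab : σ.SameCycle a b) :
    ¬(σ * swap a b).SameCycle b a := by
  -- the arc `(a, b]`, which becomes the cycle of `b`
  let arc : Set P := {y | ∃ i, 0 < i ∧ (σ ^ i) a = y ∧ ∀ j, 0 < j → j < i → (σ ^ j) a ≠ b}
  have ha : a ∉ arc := by
    rintro ⟨i, hi, hia, hib⟩
    obtain ⟨k, hk⟩ := hab.exists_nat_pow_eq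
    have hper : Function.IsPeriodicPt σ i a := by
      rw [Function.IsPeriodicPt, Function.IsFixedPt, ← coe_pow, hia]
    have hkmod : (σ ^ (k % i)) a = b := by rw [coe_pow, hper.iterate_mod_apply, ← coe_pow, hk]
    refine hib (k % i) (Nat.pos_of_ne_zero fun h0 => hne ?_) (Nat.mod_lt _ hi) hkmod
    rw [← hkmod, h0, pow_zero, one_apply]
  have hb : b ∈ arc := by
    have hex : ∃ i, 0 < i ∧ (σ ^ i) a = b := by
      obtain ⟨i, hi, -, h⟩ := hab.exists_pow_eq''
      exact ⟨i, hi, h⟩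
    exact ⟨Nat.find hex, (Nat.find_spec hex).1, (Nat.find_spec hex).2,
      fun j hj hji h => Nat.find_min hex hji ⟨hj, h⟩⟩
  have hmaps : Set.MapsTo (σ * swap a b) arc arc := by
    rintro _ ⟨i, hi, rfl, hib⟩
    by_cases hyb : (σ ^ i) a = b
    · exact ⟨1, one_pos, by simp [hyb], fun j hj hj1 => absurd hj1 (by omega)⟩
    have hya : (σ ^ i) a ≠ a := fun h => ha ⟨i, hi, h, hib⟩
    refine ⟨i + 1, i.succ_pos, ?_, fun j hj hji => ?_⟩
    · rw [mul_apply, swap_apply_of_ne_of_ne hya hyb, pow_succ', mul_apply]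
    · rcases (Nat.lt_succ_iff.1 hji).lt_or_eq with h | rfl
      · exact hib j hj h
      · exact hyb
  exact fun h => ha (h.mem_of_mapsTo hmaps hb)

theorem sameCycle_mul_swap_iff (hab : σ.SameCycle a b) :
    (σ * swap a b).SameCycle x y ↔
      σ.SameCycle x y ∧ ((σ * swap a b).SameCycle b x ↔ (σ * swap a b).SameCycle b y) := by
  refine ⟨fun h => ⟨hab.of_mul_swap h, fun hx => hx.trans h, fun hy => hy.trans h.symm⟩, ?_⟩
  rintro ⟨hxy, hside⟩
  by_cases hbx : (σ * swap a b).SameCycle b x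
  · exact hbx.symm.trans (hside.1 hbx)
  by_cases hax : σ.SameCycle a x
  · have hby : ¬(σ * swap a b).SameCycle b y := mt hside.2 hbx
    exact (hax.mul_swap_or.resolve_right hbx).symm.trans
      ((hax.trans hxy).mul_swap_or.resolve_right hby)
  · exact hxy.mul_swap_of_not_sameCycle (mt SameCycle.symm hax)
      fun hxb => hax (hab.trans hxb.symm)

theorem sameCycle_mul_swap_mul_swap {c d : P} (hne : a ≠ b) (hab : σ.SameCycle a b)
    (hdisj : [a, b, c, d].Nodup) (hcd : (σ * swap a b).SameCycle c d)
    (hxy : (σ * swap a b).SameCycle x y) (hab' : (σ * swap c d).SameCycle a b)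
    (hxy' : (σ * swap c d).SameCycle x y) : (σ * swap a b * swap c d).SameCycle x y := by
  wlog hbx : ¬(σ * swap a b).SameCycle b x generalizing a b
  · have hax : ¬(σ * swap a b).SameCycle a x := fun hax =>
      not_sameCycle_mul_swap hne hab ((not_not.1 hbx).trans hax.symm)
    rw [swap_comm a b] at hcd hxy hax ⊢
    exact this hne.symm hab.symm ((List.Perm.swap a b [c, d]).nodup_iff.2 hdisj) hcd hxy
      hab'.symm hax
  have hcomm : σ * swap a b * swap c d = σ * swap c d * swap a b := by
    rw [mul_assoc, (disjoint_swap_swap hdisj).commute.eq, mul_assoc]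
  have hby : ¬(σ * swap a b).SameCycle b y := fun h => hbx (h.trans hxy.symm)
  rw [hcomm, sameCycle_mul_swap_iff hab', ← hcomm]
  exact ⟨hxy', iff_of_false (mt hcd.of_mul_swap hbx) (mt hcd.of_mul_swap hby)⟩

end Equiv.Perm

open Equiv Equiv.Perm

theorem cycleCount_mul_swap {P : Type*} [Finite P] [DecidableEq P] {σ : Perm P} {a b : P}
    (hne : a ≠ b) (hab : σ.SameCycle a b) :
    cycleCount (σ * swap a b) = cycleCount σ + 1 := by
  classical
  set τ := σ * swap a b
  let B : Quotient (SameCycle.setoid τ) := Quotient.mk _ b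
  let f : {c // c ≠ B} → Quotient (SameCycle.setoid σ) :=
    fun c => Quotient.map id (fun _ _ => hab.of_mul_swap) c.1
  have hf : Function.Bijective f := by
    refine ⟨?_, ?_⟩
    · rintro ⟨c, hc⟩ ⟨d, hd⟩ h
      induction c using Quotient.ind
      induction d using Quotient.ind
      rename_i x y
      have hbx : ¬τ.SameCycle b x := fun h => hc (Quotient.sound h.symm)
      have hby : ¬τ.SameCycle b y := fun h => hd (Quotient.sound h.symm)
      exact Subtype.ext (Quotient.sound
        ((sameCycle_mul_swap_iff hab).2 ⟨Quotient.exact h, iff_of_false hbx hby⟩))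
    · refine Quotient.ind fun x => ?_
      by_cases hbx : τ.SameCycle b x
      · exact ⟨⟨Quotient.mk _ a, fun h => not_sameCycle_mul_swap hne hab (Quotient.exact h).symm⟩,
          Quotient.sound (hab.trans (hab.of_mul_swap hbx))⟩
      · exact ⟨⟨Quotient.mk _ x, fun h => hbx (Quotient.exact h).symm⟩, rfl⟩
  calc cycleCount τ = Nat.card (Option {c // c ≠ B}) :=
        (Nat.card_congr (Equiv.optionSubtypeNe B)).symm
    _ = cycleCount σ + 1 := by rw [Finite.card_option, Nat.card_congr (Equiv.ofBijective f hf)]; rfl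

theorem List.Nodup.ne_and_pairwise_of_flatMap_pair {P : Type*} {L : List (P × P)}
    (h : (L.flatMap fun p => [p.1, p.2]).Nodup) :
    (∀ p ∈ L, p.1 ≠ p.2) ∧ L.Pairwise fun p q => [p.1, p.2, q.1, q.2].Nodup := by
  obtain ⟨hself, hpair⟩ := List.nodup_flatMap.1 h
  refine ⟨fun p hp => by simpa using hself p hp, hpair.imp_of_mem fun hp hq hpq => ?_⟩
  exact List.nodup_append.2 ⟨hself _ hp, hself _ hq, fun a ha b hb hab => hpq ha (hab ▸ hb)⟩

theorem cycleCount_mul_prod_swap {P : Type*} [Finite P] [DecidableEq P] (L : List (P × P))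
    (σ : Perm P) (hne : ∀ p ∈ L, p.1 ≠ p.2)
    (hdisj : L.Pairwise fun p q => [p.1, p.2, q.1, q.2].Nodup)
    (hsame : ∀ p ∈ L, σ.SameCycle p.1 p.2)
    (hind : ∀ p ∈ L, ∀ q ∈ L, p ≠ q → (σ * swap p.1 p.2).SameCycle q.1 q.2) :
    cycleCount (σ * (L.map fun p => swap p.1 p.2).prod) = cycleCount σ + L.length := by
  induction L generalizing σ with
  | nil => simp
  | cons p L ih =>
    obtain ⟨hdisj_p, hdisj_L⟩ := List.pairwise_cons.1 hdisj
    have hpq : ∀ q ∈ L, p ≠ q := fun q hq h => by simpa [h] using hdisj_p q hq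
    have hind_p : ∀ q ∈ L, (σ * swap p.1 p.2).SameCycle q.1 q.2 := fun q hq =>
      hind p (by simp) q (by simp [hq]) (hpq q hq)
    have hind_q : ∀ q ∈ L, ∀ r ∈ p :: L, q ≠ r → (σ * swap q.1 q.2).SameCycle r.1 r.2 :=
      fun q hq r hr hqr => hind q (by simp [hq]) r hr hqr
    have hind' : ∀ q ∈ L, ∀ r ∈ L, q ≠ r →
        (σ * swap p.1 p.2 * swap q.1 q.2).SameCycle r.1 r.2 := fun q hq r hr hqr =>
      sameCycle_mul_swap_mul_swap (hne p (by simp)) (hsame p (by simp)) (hdisj_p q hq)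
        (hind_p q hq) (hind_p r hr) (hind_q q hq p (by simp) (hpq q hq).symm)
        (hind_q q hq r (by simp [hr]) hqr)
    rw [List.map_cons, List.prod_cons, ← mul_assoc, List.length_cons,
      ih _ (fun q hq => hne q (by simp [hq])) hdisj_L hind_p hind',
      cycleCount_mul_swap (hne p (by simp)) (hsame p (by simp)), add_right_comm, add_assoc]

/-- Splitting circles along an independent set of chords.  The marked points on the circles
are the chord endpoints; the circles are the cycles of `σ`.  A chord with endpoints `p.1, p.2`
is split by composing with the transposition `swap p.1 p.2`.  Hypotheses: all chord endpoints
are distinct; (i) each chord has both endpoints on the same circle; (ii) two chords lying on a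
common circle do not alternate around it, i.e. after splitting along the first chord the two
endpoints of the second still lie on one circle.  Conclusion: splitting along all `k = |C|`
chords yields exactly `k` extra circles. -/
theorem cycleCount_split_independent {P : Type*} [Fintype P] [DecidableEq P]
    (σ : Equiv.Perm P) (L : List (P × P))
    (hnodup : (L.flatMap fun p => [p.1, p.2]).Nodup)
    (hsame : ∀ p ∈ L, σ.SameCycle p.1 p.2)
    (hnonalt : ∀ p ∈ L, ∀ q ∈ L, p ≠ q → σ.SameCycle p.1 q.1 →
      (σ * Equiv.swap p.1 p.2).SameCycle q.1 q.2) :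
    cycleCount (σ * (L.map fun p => Equiv.swap p.1 p.2).prod) =
      cycleCount σ + L.length := by
  obtain ⟨hne, hdisj⟩ := hnodup.ne_and_pairwise_of_flatMap_pair
  refine cycleCount_mul_prod_swap L σ hne hdisj hsame fun p hp q hq hpq => ?_
  by_cases hpq₁ : σ.SameCycle p.1 q.1
  · exact hnonalt p hp q hq hpq hpq₁
  · exact (hsame q hq).mul_swap_of_not_sameCycle (mt SameCycle.symm hpq₁)
      fun h => hpq₁ ((hsame p hp).trans h.symm)
end
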